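/- Let R be an associative unital ℚ-algebra containing elements t and ∂ satisfying ∂·t − t·∂ = 1, and let M be a left R-module. Set M₀ := {m ∈ M : t·m = 0}. If M is generated as an R-module by finitely many elements e₁, …, e_n such that each eᵢ is annihilated by some power of t (i.e., for each i there is jᵢ ≥ 1 with t^{jᵢ}·eᵢ = 0), then M equals the R-submodule generated by M₀, that is, R·M₀ = M. -/

import Mathlib

/-!
From `∂t − t∂ = 1` one gets `t ^ k * (t∂ + (k + 1)) = ∂ * t ^ (k + 1)`, so `t∂ + (k + 1)` maps
`ker t^(k+1)` into `ker t^k`, as does `t`. By induction on `k` both `(t∂ + (k + 1)) m` and `t m`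
lie in `R · ker t` for `m ∈ ker t^(k+1)`, `k ≥ 1`, hence so does
`(t∂ + (k + 1)) m - ∂ (t m) = k m`, and `k` is invertible in the `ℚ`-algebra `R`.
-/

section WeylRelation

variable {R : Type*} [Ring R] {t d : R}

theorem mul_pow_succ_of_mul_sub_mul_eq_one (h : d * t - t * d = 1) (k : ℕ) :
    d * t ^ (k + 1) = t ^ (k + 1) * d + (k + 1 : ℕ) * t ^ k := by
  have hdt : d * t = t * d + 1 := by rw [← h]; abel
  induction k with
  | zero => simpa using hdt
  | succ k ih =>
    calc d * t ^ (k + 2) = (d * t ^ (k + 1)) * t := by rw [mul_assoc, ← pow_succ]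
      _ = t ^ (k + 1) * (d * t) + (k + 1 : ℕ) * t ^ (k + 1) := by
        rw [ih, add_mul, mul_assoc, mul_assoc, ← pow_succ]
      _ = t ^ (k + 2) * d + (k + 2 : ℕ) * t ^ (k + 1) := by
        rw [hdt, mul_add, ← mul_assoc, ← pow_succ]; push_cast; noncomm_ring

theorem pow_mul_mul_add_natCast_of_mul_sub_mul_eq_one (h : d * t - t * d = 1) (k : ℕ) :
    t ^ k * (t * d + (k + 1 : ℕ)) = d * t ^ (k + 1) := by
  rw [mul_pow_succ_of_mul_sub_mul_eq_one h, mul_add, ← mul_assoc, ← pow_succ,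
    (Nat.cast_commute (k + 1) _).eq]

end WeylRelation

theorem Submodule.mem_of_natCast_smul_mem {R M : Type*} [Ring R] [Algebra ℚ R]
    [AddCommGroup M] [Module R M] (N : Submodule R M) {n : ℕ} (hn : n ≠ 0) {m : M}
    (hm : (n : R) • m ∈ N) : m ∈ N := by
  have hunit : IsUnit (n : R) := by
    simpa using (IsUnit.mk0 (n : ℚ) (by exact_mod_cast hn)).map (algebraMap ℚ R)
  exact (N.smul_mem_iff_of_isUnit hunit).mp hm

theorem mem_span_ker_of_pow_smul_eq_zero {R M : Type*} [Ring R] [Algebra ℚ R]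
    [AddCommGroup M] [Module R M] {t d : R} (h : d * t - t * d = 1) {j : ℕ} {m : M}
    (hm : t ^ j • m = 0) : m ∈ Submodule.span R {m : M | t • m = 0} := by
  set N := Submodule.span R {m : M | t • m = 0}
  obtain _ | k := j
  · simp_all
  induction k generalizing m with
  | zero => exact Submodule.subset_span (by simpa using hm)
  | succ k ih =>
    have htm : t • m ∈ N := ih (by rwa [smul_smul, ← pow_succ])
    have hcorr : (t * d + (k + 1 + 1 : ℕ)) • m ∈ N := ih <| by
      rw [smul_smul, pow_mul_mul_add_natCast_of_mul_sub_mul_eq_one h, mul_smul, hm, smul_zero]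
    have hshift : t * d + (k + 1 + 1 : ℕ) = d * t + (k + 1 : ℕ) := by
      rw [Nat.cast_succ (k + 1), ← h]; abel
    refine N.mem_of_natCast_smul_mem k.succ_ne_zero ?_
    have := N.sub_mem hcorr (N.smul_mem d htm)
    rwa [hshift, add_smul, mul_smul, add_sub_cancel_left] at this

/-- Let `R` be an associative unital `ℚ`-algebra with elements `t, ∂` satisfying
`∂·t − t·∂ = 1`, and let `M` be a left `R`-module. If `M` is generated by finitely many
elements `e₁, …, e_n`, each annihilated by some power of `t`, then `M` is generated by
`M₀ = {m ∈ M : t·m = 0}`, i.e. `R·M₀ = M`. -/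
theorem span_ker_eq_top_of_generators_pow_smul_eq_zero
    (R : Type*) [Ring R] [Algebra ℚ R] (t d : R) (h : d * t - t * d = 1)
    (M : Type*) [AddCommGroup M] [Module R M]
    (n : ℕ) (e : Fin n → M)
    (hgen : Submodule.span R (Set.range e) = ⊤)
    (hann : ∀ i : Fin n, ∃ j : ℕ, 1 ≤ j ∧ t ^ j • e i = 0) :
    Submodule.span R {m : M | t • m = 0} = ⊤ := by
  rw [eq_top_iff, ← hgen, Submodule.span_le]
  rintro _ ⟨i, rfl⟩
  obtain ⟨j, -, hj⟩ := hann i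
  exact mem_span_ker_of_pow_smul_eq_zero h hj
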